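/- Let Γ_1,…,Γ_n be Hermitian d×d complex matrices and γ_1,…,γ_n real numbers, let S be the corresponding constraint set, and assume every element of S has trace 1. Let G be a CPTNI map from d×d to d'×d' complex matrices with d' ≥ 2, Z a pinching channel on d'×d' complex matrices, and define f(ρ) = H(Z(G(ρ))) − H(G(ρ)), G_ε(ρ) = (1−ε)·G(ρ) + (ε/d')·I_{d'}, f_ε(ρ) = H(Z(G_ε(ρ))) − H(G_ε(ρ)), and ζ_ε = 2ε(d'−1)·log(d'/(ε(d'−1))). Let ε satisfy 0 < ε ≤ 1/(e·(d'−1)), let ρ ∈ S, and let ∇ be a Hermitian d×d matrix satisfying the subgradient inequality f_ε(σ) ≥ f_ε(ρ) + Re Tr((σ − ρ)ᵀ ∇) for all σ ∈ S. Then for every y ∈ ℝⁿ such that ∇ − Σ_{i=1}^n y_i Γ_iᵀ is positive semidefinite, and for every σ ∈ S, one has f(σ) ≥ f_ε(ρ) − Re Tr(ρᵀ ∇) + Σ_{i=1}^n y_i γ_i − ζ_ε. -/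

import Mathlib

open scoped BigOperators ComplexOrder Matrix

/-- The von Neumann entropy `H(σ) = −Σ λ_i log λ_i` of a Hermitian matrix
(`0` for non-Hermitian matrices; `log` is the natural logarithm, `0 log 0 = 0`). -/
noncomputable def vnEntropy {d : ℕ} (A : Matrix (Fin d) (Fin d) ℂ) : ℝ :=
  if hA : A.IsHermitian then -∑ i, hA.eigenvalues i * Real.log (hA.eigenvalues i) else 0

/-!
Since `σᵀ ⪰ 0` and `∇ - Σ yᵢ Γᵢᵀ ⪰ 0`, weak duality gives
`Re Tr(σᵀ ∇) ≥ Σ yᵢ Tr(Γᵢ σ) = Σ yᵢ γᵢ`, so the subgradient inequality at `σ` yields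
`f_ε(σ) ≥ f_ε(ρ) - Re Tr(ρᵀ ∇) + Σ yᵢ γᵢ`. It remains to show `f_ε(σ) - f(σ) ≤ ζ_ε`.
Both `G(σ)` and `Z(G(σ))` are positive semidefinite of trace at most one, and the unital
pinching `Z` commutes with the depolarization `X ↦ (1 - ε) X + (ε / d') 1`. Depolarizing moves
each of the `d'` eigenvalues by at most `δ = ε (d' - 1) / d' ≤ 1 / e`, which changes `-x log x`
by at most `-δ log δ`; the two entropies contribute `2 d' (-δ log δ) = ζ_ε`.
-/

namespace Real

lemma negMulLog_add_le {a b : ℝ} (ha : 0 ≤ a) (hb : 0 ≤ b) :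
    negMulLog (a + b) ≤ negMulLog a + negMulLog b := by
  rcases ha.eq_or_lt with rfl | ha
  · simp
  rcases hb.eq_or_lt with rfl | hb
  · simp
  have hla : log a ≤ log (a + b) := log_le_log ha (by linarith)
  have hlb : log b ≤ log (a + b) := log_le_log hb (by linarith)
  simp only [negMulLog, neg_mul]
  nlinarith [mul_le_mul_of_nonneg_left hla ha.le, mul_le_mul_of_nonneg_left hlb hb.le]

lemma monotoneOn_negMulLog : MonotoneOn negMulLog (Set.Icc 0 (exp (-1))) := by
  refine monotoneOn_of_deriv_nonneg (convex_Icc _ _) continuous_negMulLog.continuousOn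
    (fun x hx => ?_) (fun x hx => ?_) <;> rw [interior_Icc] at hx
  · exact (differentiableAt_negMulLog hx.1.ne').differentiableWithinAt
  · rw [deriv_negMulLog hx.1.ne']
    linarith [(log_le_iff_le_exp hx.1).2 hx.2.le]

lemma monotoneOn_add_negMulLog : MonotoneOn (fun t => t + negMulLog t) (Set.Icc 0 1) := by
  have hderiv {x : ℝ} (hx : x ≠ 0) : HasDerivAt (fun t => t + negMulLog t) (-log x) x :=
    ((hasDerivAt_id' x).fun_add (hasDerivAt_negMulLog hx)).congr_deriv (by ring)
  refine monotoneOn_of_deriv_nonneg (convex_Icc _ _) (by fun_prop)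
    (fun x hx => ?_) (fun x hx => ?_) <;> rw [interior_Icc] at hx
  · exact (hderiv hx.1.ne').differentiableAt.differentiableWithinAt
  · rw [(hderiv hx.1.ne').deriv, neg_nonneg]
    exact log_nonpos hx.1.le hx.2.le

lemma self_le_negMulLog {x : ℝ} (hx0 : 0 ≤ x) (hx : x ≤ exp (-1)) : x ≤ negMulLog x := by
  rcases hx0.eq_or_lt with rfl | hx0
  · simp
  have := (log_le_iff_le_exp hx0).2 hx
  rw [negMulLog, neg_mul, ← mul_neg]
  nlinarith

/-- For `y < x` this uses that `t + negMulLog t` is monotone and `x - y ≤ δ ≤ negMulLog δ`. -/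
lemma negMulLog_sub_negMulLog_le {x y δ : ℝ} (hx0 : 0 ≤ x) (hx1 : x ≤ 1) (hy0 : 0 ≤ y)
    (hxy : |y - x| ≤ δ) (hδ : δ ≤ exp (-1)) :
    negMulLog y - negMulLog x ≤ negMulLog δ := by
  have hδ0 : 0 ≤ δ := (abs_nonneg _).trans hxy
  rcases le_total x y with hle | hle
  · have hyx : y - x ≤ δ := (le_abs_self _).trans hxy
    have hsub := negMulLog_add_le hx0 (sub_nonneg.2 hle)
    rw [add_sub_cancel] at hsub
    have := monotoneOn_negMulLog ⟨sub_nonneg.2 hle, hyx.trans hδ⟩ ⟨hδ0, hδ⟩ hyx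
    linarith
  · have hxy' : x - y ≤ δ := (le_abs_self _).trans (abs_sub_comm x y ▸ hxy)
    have := monotoneOn_add_negMulLog ⟨hy0, hle.trans hx1⟩ ⟨hx0, hx1⟩ hle
    linarith [self_le_negMulLog hδ0 hδ]

lemma abs_negMulLog_sub_negMulLog_le {x y δ : ℝ} (hx0 : 0 ≤ x) (hx1 : x ≤ 1) (hy0 : 0 ≤ y)
    (hy1 : y ≤ 1) (hxy : |y - x| ≤ δ) (hδ : δ ≤ exp (-1)) :
    |negMulLog y - negMulLog x| ≤ negMulLog δ :=
  abs_sub_le_iff.2 ⟨negMulLog_sub_negMulLog_le hx0 hx1 hy0 hxy hδ,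
    negMulLog_sub_negMulLog_le hy0 hy1 hx0 (abs_sub_comm x y ▸ hxy) hδ⟩

/-- For `D ≥ 2`, mixing `x ∈ [0, 1]` with `1 / D` moves it by at most `ε (D - 1) / D`. -/
lemma abs_negMulLog_mix_sub_le {x ε D : ℝ} (hx0 : 0 ≤ x) (hx1 : x ≤ 1) (hε0 : 0 ≤ ε)
    (hD : 2 ≤ D) (hε : ε * (D - 1) ≤ exp (-1)) :
    |negMulLog ((1 - ε) * x + ε / D) - negMulLog x| ≤ negMulLog (ε * (D - 1) / D) := by
  have hε1 : ε ≤ 1 := by nlinarith [exp_le_one_iff.2 (show (-1 : ℝ) ≤ 0 by norm_num)]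
  have hεD : ε / D ≤ ε * (D - 1) / D := by gcongr; nlinarith
  have hδ : ε * (D - 1) / D ≤ exp (-1) :=
    (div_le_self (by nlinarith) (by linarith)).trans hε
  have hshift : (1 - ε) * x + ε / D - x = ε / D - ε * x := by ring
  have hεx : ε * x ≤ ε := mul_le_of_le_one_right hε0 hx1
  have hsplit : ε * (D - 1) / D = ε - ε / D := by field_simp
  refine abs_negMulLog_sub_negMulLog_le hx0 hx1 (by positivity) ?_ ?_ hδ
  · nlinarith
  · rw [hshift, abs_le]
    constructor <;> nlinarith [mul_nonneg hε0 hx0]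

lemma mul_le_exp_neg_one_of_le_one_div {ε c : ℝ} (hc : 0 < c) (h : ε ≤ 1 / (exp 1 * c)) :
    ε * c ≤ exp (-1) := by
  rwa [le_div_iff₀ (by positivity), mul_left_comm, ← le_div_iff₀' (exp_pos 1), one_div,
    ← Real.exp_neg] at h

lemma mul_negMulLog_div {t D : ℝ} (hD : D ≠ 0) : D * negMulLog (t / D) = t * log (D / t) := by
  rw [negMulLog, ← inv_div, log_inv]
  field_simp

end Real

namespace Matrix

variable {n 𝕜 : Type*} [Fintype n] [RCLike 𝕜]

open scoped MatrixOrder in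
lemma PosSemidef.trace_mul_nonneg [DecidableEq n] {A B : Matrix n n 𝕜} (hA : A.PosSemidef)
    (hB : B.PosSemidef) : 0 ≤ (A * B).trace := by
  have hsqrt : (CFC.sqrt A)ᴴ = CFC.sqrt A :=
    (nonneg_iff_posSemidef.mp (CFC.sqrt_nonneg A)).1.eq
  have hconj : (CFC.sqrt A * B * CFC.sqrt A).PosSemidef := by
    simpa [hsqrt] using hB.mul_mul_conjTranspose_same (CFC.sqrt A)
  rw [← CFC.sqrt_mul_sqrt_self A hA.nonneg, Matrix.mul_assoc, ← trace_mul_cycle',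
    ← Matrix.mul_assoc]
  exact hconj.trace_nonneg

lemma posSemidef_sum_mul_mul_conjTranspose {m ι : Type*} [Fintype m] [Fintype ι]
    {X : Matrix n n 𝕜} (K : ι → Matrix m n 𝕜) (hX : X.PosSemidef) :
    (∑ i, K i * X * (K i)ᴴ).PosSemidef :=
  posSemidef_sum _ fun i _ => hX.mul_mul_conjTranspose_same (K i)

lemma trace_sum_mul_mul_conjTranspose_le [DecidableEq n] {m ι : Type*} [Fintype m] [Fintype ι]
    {X : Matrix n n 𝕜} (K : ι → Matrix m n 𝕜) (hK : (1 - ∑ i, (K i)ᴴ * K i).PosSemidef)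
    (hX : X.PosSemidef) : (∑ i, K i * X * (K i)ᴴ).trace ≤ X.trace := by
  have hcycle : (∑ i, K i * X * (K i)ᴴ).trace = ((∑ i, (K i)ᴴ * K i) * X).trace := by
    simp only [trace_sum, Finset.sum_mul, trace_mul_cycle _ X]
  have := hK.trace_mul_nonneg hX
  rwa [Matrix.sub_mul, Matrix.one_mul, trace_sub, sub_nonneg, ← hcycle] at this

section Pinching

variable {ι : Type*} [Fintype ι] {P : ι → Matrix n n 𝕜}

lemma posSemidef_sum_mul_mul_self (hP : ∀ j, (P j)ᴴ = P j) {X : Matrix n n 𝕜}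
    (hX : X.PosSemidef) : (∑ j, P j * X * P j).PosSemidef := by
  simpa only [hP] using posSemidef_sum_mul_mul_conjTranspose P hX

lemma trace_sum_mul_mul_self [DecidableEq n] (hP : ∀ j, P j * P j = P j) (hP1 : ∑ j, P j = 1)
    (X : Matrix n n 𝕜) : (∑ j, P j * X * P j).trace = X.trace := by
  have hcycle (j : ι) : (P j * X * P j).trace = (P j * X).trace := by
    rw [trace_mul_cycle, hP]
  rw [trace_sum, Finset.sum_congr rfl fun j _ => hcycle j, ← trace_sum, ← Finset.sum_mul, hP1,
    Matrix.one_mul]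

lemma sum_mul_smul_add_smul_one_mul [DecidableEq n] (hP : ∀ j, P j * P j = P j)
    (hP1 : ∑ j, P j = 1) (X : Matrix n n 𝕜) (a b : ℝ) :
    ∑ j, P j * (a • X + b • 1) * P j = a • ∑ j, P j * X * P j + b • 1 := by
  simp only [Matrix.mul_add, Matrix.add_mul, Matrix.mul_smul, Matrix.smul_mul, Matrix.mul_one, hP,
    Finset.sum_add_distrib, ← Finset.smul_sum, hP1]

end Pinching

lemma IsHermitian.re_trace_eq_sum_eigenvalues [DecidableEq n] {A : Matrix n n 𝕜}
    (hA : A.IsHermitian) : RCLike.re A.trace = ∑ i, hA.eigenvalues i := by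
  simp [hA.trace_eq_sum_eigenvalues]

lemma PosSemidef.eigenvalues_le_re_trace [DecidableEq n] {A : Matrix n n 𝕜}
    (hA : A.PosSemidef) (i : n) : hA.1.eigenvalues i ≤ RCLike.re A.trace := by
  rw [hA.1.re_trace_eq_sum_eigenvalues]
  exact Finset.single_le_sum (fun j _ => hA.eigenvalues_nonneg j) (Finset.mem_univ i)

lemma IsHermitian.trace_cfc [DecidableEq n] {A : Matrix n n 𝕜} (hA : A.IsHermitian)
    (g : ℝ → ℝ) : (cfc g A).trace = ∑ i, (g (hA.eigenvalues i) : 𝕜) := by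
  rw [hA.cfc_eq g, IsHermitian.cfc, Unitary.conjStarAlgAut_apply, trace_mul_cycle,
    Unitary.star_mul_self_of_mem (SetLike.coe_mem _), Matrix.one_mul, trace_diagonal]
  rfl

lemma IsHermitian.smul_add_smul_one_eq_cfc [DecidableEq n] {A : Matrix n n 𝕜}
    (hA : A.IsHermitian) (a b : ℝ) :
    a • A + b • (1 : Matrix n n 𝕜) = cfc (fun t : ℝ => a * t + b) A := by
  have hsa : IsSelfAdjoint A := hA
  rw [cfc_add A (a * ·) (fun _ => b), cfc_const_mul_id a A hsa, cfc_const b A hsa,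
    Algebra.algebraMap_eq_smul_one]

/-- Weak duality for the constraints `Tr (Γ i σ) = γ i`. -/
lemma sum_mul_le_re_trace_transpose_mul [DecidableEq n] {ι : Type*} [Fintype ι]
    {σ W : Matrix n n 𝕜} {Γ : ι → Matrix n n 𝕜} {γ y : ι → ℝ} (hσ : σ.PosSemidef)
    (hσΓ : ∀ i, (Γ i * σ).trace = γ i) (hW : (W - ∑ i, y i • (Γ i)ᵀ).PosSemidef) :
    ∑ i, y i * γ i ≤ RCLike.re (σᵀ * W).trace := by
  have hpair (i : ι) : (σᵀ * (y i • (Γ i)ᵀ)).trace = ((y i * γ i : ℝ) : 𝕜) := by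
    rw [Matrix.mul_smul, trace_smul, ← transpose_mul, trace_transpose, hσΓ,
      RCLike.real_smul_eq_coe_mul, RCLike.ofReal_mul]
  have hgap := (RCLike.nonneg_iff.mp (hσ.transpose.trace_mul_nonneg hW)).1
  rw [Matrix.mul_sub, trace_sub, Matrix.mul_sum, trace_sum, Finset.sum_congr rfl fun i _ => hpair i,
    map_sub, ← RCLike.ofReal_sum, RCLike.ofReal_re] at hgap
  linarith

end Matrix

section vnEntropy

open Real

variable {k : ℕ} {A : Matrix (Fin k) (Fin k) ℂ}

lemma vnEntropy_eq_sum_negMulLog (hA : A.IsHermitian) :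
    vnEntropy A = ∑ i, negMulLog (hA.eigenvalues i) := by
  simp [vnEntropy, hA, negMulLog]

lemma vnEntropy_cfc (hA : A.IsHermitian) (g : ℝ → ℝ) :
    vnEntropy (cfc g A) = ∑ i, negMulLog (g (hA.eigenvalues i)) := by
  have hB : (cfc g A).IsHermitian := cfc_predicate g A
  have hcomp : cfc negMulLog (cfc g A) = cfc (fun t => negMulLog (g t)) A :=
    (cfc_comp' negMulLog g A ((A.finite_real_spectrum.image g).continuousOn _)
      (A.finite_real_spectrum.continuousOn _)).symm
  have htrace := congrArg Complex.re (congrArg Matrix.trace hcomp)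
  rw [hB.trace_cfc, hA.trace_cfc] at htrace
  simpa [vnEntropy_eq_sum_negMulLog hB] using htrace

lemma abs_vnEntropy_depolarize_sub_le (hA : A.PosSemidef) (htr : A.trace.re ≤ 1) {ε : ℝ}
    (hε0 : 0 ≤ ε) (hk : 2 ≤ k) (hε : ε * (k - 1) ≤ exp (-1)) :
    |vnEntropy ((1 - ε) • A + (ε / k) • (1 : Matrix (Fin k) (Fin k) ℂ)) - vnEntropy A|
      ≤ k * negMulLog (ε * (k - 1) / k) := by
  rw [hA.1.smul_add_smul_one_eq_cfc, vnEntropy_cfc hA.1, vnEntropy_eq_sum_negMulLog hA.1,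
    ← Finset.sum_sub_distrib]
  refine (Finset.abs_sum_le_sum_abs _ _).trans ?_
  have hk' : (2 : ℝ) ≤ k := by exact_mod_cast hk
  calc ∑ i, |negMulLog ((1 - ε) * hA.1.eigenvalues i + ε / k) - negMulLog (hA.1.eigenvalues i)|
      ≤ ∑ _i : Fin k, negMulLog (ε * (k - 1) / k) :=
        Finset.sum_le_sum fun i _ => abs_negMulLog_mix_sub_le (hA.eigenvalues_nonneg i)
          ((hA.eigenvalues_le_re_trace i).trans htr) hε0 hk' hε
    _ = k * negMulLog (ε * (k - 1) / k) := by simp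

end vnEntropy

open Matrix Real in
theorem perturbed_dual_lower_bound_general
    {d d' n m p : ℕ} (hd' : 2 ≤ d')
    (Γ : Fin n → Matrix (Fin d) (Fin d) ℂ)
    (γ : Fin n → ℝ)
    (S : Set (Matrix (Fin d) (Fin d) ℂ))
    (hS : S = {ρ | ρ.PosSemidef ∧ ∀ i, (Γ i * ρ).trace = (γ i : ℂ)})
    (hStrace : ∀ ρ ∈ S, ρ.trace = 1)
    (K : Fin m → Matrix (Fin d') (Fin d) ℂ)
    (hK : ((1 : Matrix (Fin d) (Fin d) ℂ) - ∑ i, (K i)ᴴ * K i).PosSemidef)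
    (G : Matrix (Fin d) (Fin d) ℂ → Matrix (Fin d') (Fin d') ℂ)
    (hG : G = fun X => ∑ i, K i * X * (K i)ᴴ)
    (P : Fin p → Matrix (Fin d') (Fin d') ℂ)
    (hP1 : ∀ j, (P j)ᴴ = P j) (hP2 : ∀ j, P j * P j = P j)
    (hP4 : ∑ j, P j = 1)
    (Z : Matrix (Fin d') (Fin d') ℂ → Matrix (Fin d') (Fin d') ℂ)
    (hZ : Z = fun X => ∑ j, P j * X * P j)
    (ε : ℝ) (hε0 : 0 < ε) (hεe : ε ≤ 1 / (Real.exp 1 * ((d' : ℝ) - 1)))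
    (f fε : Matrix (Fin d) (Fin d) ℂ → ℝ)
    (hf : f = fun X => vnEntropy (Z (G X)) - vnEntropy (G X))
    (Gε : Matrix (Fin d) (Fin d) ℂ → Matrix (Fin d') (Fin d') ℂ)
    (hGε : Gε = fun X => (1 - ε) • G X + (ε / d') • (1 : Matrix (Fin d') (Fin d') ℂ))
    (hfε : fε = fun X => vnEntropy (Z (Gε X)) - vnEntropy (Gε X))
    (ζ : ℝ) (hζ : ζ = 2 * ε * ((d' : ℝ) - 1) * Real.log ((d' : ℝ) / (ε * ((d' : ℝ) - 1))))
    (ρ : Matrix (Fin d) (Fin d) ℂ)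
    (grad : Matrix (Fin d) (Fin d) ℂ)
    (hsub : ∀ σ ∈ S, fε σ ≥ fε ρ + (((σ - ρ)ᵀ * grad).trace).re)
    (y : Fin n → ℝ)
    (hy : (grad - ∑ i, y i • (Γ i)ᵀ).PosSemidef) :
    ∀ σ ∈ S, f σ ≥ fε ρ - ((ρᵀ * grad).trace).re + ∑ i, y i * γ i - ζ := by
  intro σ hσ
  subst hS
  obtain ⟨hσP, hσΓ⟩ := id hσ
  have hGσ : (G σ).PosSemidef := hG ▸ posSemidef_sum_mul_mul_conjTranspose K hσP
  have hGtr : (G σ).trace.re ≤ 1 := by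
    have := (Complex.le_def.mp (trace_sum_mul_mul_conjTranspose_le K hK hσP)).1
    simpa [hG, hStrace σ hσ] using this
  have hZGσ : (Z (G σ)).PosSemidef := hZ ▸ posSemidef_sum_mul_mul_self hP1 hGσ
  have hZtr : (Z (G σ)).trace = (G σ).trace := hZ ▸ trace_sum_mul_mul_self hP2 hP4 _
  have hGεσ : Gε σ = (1 - ε) • G σ + (ε / d') • 1 := by rw [hGε]
  have hZGε : Z (Gε σ) = (1 - ε) • Z (G σ) + (ε / d') • 1 := by
    rw [hGεσ, hZ]
    exact sum_mul_smul_add_smul_one_mul hP2 hP4 _ _ _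
  have hd'1 : (1 : ℝ) < d' := by exact_mod_cast hd'
  have hε : ε * (d' - 1) ≤ exp (-1) := mul_le_exp_neg_one_of_le_one_div (by linarith) hεe
  have hζ' : ζ = 2 * (d' * negMulLog (ε * (d' - 1) / d')) := by
    rw [hζ, mul_negMulLog_div (by positivity)]
    ring
  have hZbound := abs_vnEntropy_depolarize_sub_le hZGσ (hZtr ▸ hGtr) hε0.le hd' hε
  have hGbound := abs_vnEntropy_depolarize_sub_le hGσ hGtr hε0.le hd' hε
  have hdual : ∑ i, y i * γ i ≤ (σᵀ * grad).trace.re :=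
    sum_mul_le_re_trace_transpose_mul hσP hσΓ hy
  have hsg := hsub σ hσ
  subst hf hfε
  beta_reduce at hsg ⊢
  rw [hZGε, hGεσ, transpose_sub, Matrix.sub_mul, trace_sub, Complex.sub_re] at hsg
  rw [hζ']
  linarith [abs_le.mp hZbound, abs_le.mp hGbound]

/-- Theorem 2 of the paper. For `ρ` in the constraint set `S` (all of
whose elements have trace 1), a Hermitian `∇` satisfying the subgradient inequality
for the perturbed objective `f_ε` on `S`, and a dual-feasible `y`, every `σ ∈ S`
satisfies `f(σ) ≥ f_ε(ρ) − Re Tr(ρᵀ ∇) + Σ y_i γ_i − ζ_ε`. -/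
theorem perturbed_dual_lower_bound
    {d d' n m p : ℕ} (hd' : 2 ≤ d')
    (Γ : Fin n → Matrix (Fin d) (Fin d) ℂ) (hΓ : ∀ i, (Γ i).IsHermitian)
    (γ : Fin n → ℝ)
    (S : Set (Matrix (Fin d) (Fin d) ℂ))
    (hS : S = {ρ | ρ.PosSemidef ∧ ∀ i, (Γ i * ρ).trace = (γ i : ℂ)})
    (hStrace : ∀ ρ ∈ S, ρ.trace = 1)
    (K : Fin m → Matrix (Fin d') (Fin d) ℂ)
    (hK : ((1 : Matrix (Fin d) (Fin d) ℂ) - ∑ i, (K i)ᴴ * K i).PosSemidef)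
    (G : Matrix (Fin d) (Fin d) ℂ → Matrix (Fin d') (Fin d') ℂ)
    (hG : G = fun X => ∑ i, K i * X * (K i)ᴴ)
    (P : Fin p → Matrix (Fin d') (Fin d') ℂ)
    (hP1 : ∀ j, (P j)ᴴ = P j) (hP2 : ∀ j, P j * P j = P j)
    (hP3 : ∀ j k, j ≠ k → P j * P k = 0)
    (hP4 : ∑ j, P j = 1)
    (Z : Matrix (Fin d') (Fin d') ℂ → Matrix (Fin d') (Fin d') ℂ)
    (hZ : Z = fun X => ∑ j, P j * X * P j)
    (ε : ℝ) (hε0 : 0 < ε) (hεe : ε ≤ 1 / (Real.exp 1 * ((d' : ℝ) - 1)))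
    (f fε : Matrix (Fin d) (Fin d) ℂ → ℝ)
    (hf : f = fun X => vnEntropy (Z (G X)) - vnEntropy (G X))
    (Gε : Matrix (Fin d) (Fin d) ℂ → Matrix (Fin d') (Fin d') ℂ)
    (hGε : Gε = fun X => (1 - ε) • G X + (ε / d') • (1 : Matrix (Fin d') (Fin d') ℂ))
    (hfε : fε = fun X => vnEntropy (Z (Gε X)) - vnEntropy (Gε X))
    (ζ : ℝ) (hζ : ζ = 2 * ε * ((d' : ℝ) - 1) * Real.log ((d' : ℝ) / (ε * ((d' : ℝ) - 1))))
    (ρ : Matrix (Fin d) (Fin d) ℂ) (hρ : ρ ∈ S)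
    (grad : Matrix (Fin d) (Fin d) ℂ) (hgrad : grad.IsHermitian)
    (hsub : ∀ σ ∈ S, fε σ ≥ fε ρ + (((σ - ρ)ᵀ * grad).trace).re)
    (y : Fin n → ℝ)
    (hy : (grad - ∑ i, y i • (Γ i)ᵀ).PosSemidef) :
    ∀ σ ∈ S, f σ ≥ fε ρ - ((ρᵀ * grad).trace).re + ∑ i, y i * γ i - ζ :=
  perturbed_dual_lower_bound_general hd' Γ γ S hS hStrace K hK G hG P hP1 hP2 hP4 Z hZ ε hε0 hεe f
    fε hf Gε hGε hfε ζ hζ ρ grad hsub y hy
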